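/- arXiv:1904.07708 — 6 statements merged into one kernel-verified Lean document; each statement's English description precedes it below -/
import Mathlib

section
/- Let S = M₂(ℝ⁺). The only subtractive left ideals of S are {0}, S, E₁ = {[[a,0],[b,0]]}, E₂ = {[[0,c],[0,d]]}, and N_r = {[[ra,a],[rb,b]]} for r ∈ ℝ⁺ \ {0}. -/
open Matrix

/-- The only subtractive left ideals of `S = M₂(ℝ⁺)` are `{0}`, `S`, `E₁`, `E₂` and
`N_r` for `r ∈ ℝ⁺ \ {0}`. -/
theorem stmt_11 (I : Set (Matrix (Fin 2) (Fin 2) NNReal)) (h0 : 0 ∈ I)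
    (hadd : ∀ A ∈ I, ∀ B ∈ I, A + B ∈ I)
    (hmul : ∀ X : Matrix (Fin 2) (Fin 2) NNReal, ∀ A ∈ I, X * A ∈ I)
    (hsub : ∀ A B : Matrix (Fin 2) (Fin 2) NNReal, B ∈ I → A + B ∈ I → A ∈ I) :
    I = {0} ∨ I = Set.univ ∨
    I = {A | ∃ a b : NNReal, A = !![a, 0; b, 0]} ∨
    I = {A | ∃ c d : NNReal, A = !![0, c; 0, d]} ∨
    ∃ r : NNReal, r ≠ 0 ∧ I = {A | ∃ a b : NNReal, A = !![r * a, a; r * b, b]} := by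
  classical
  -- the first row of any member of `I`, placed as a matrix with zero second row, is in `I`
  have hrow0 : ∀ A ∈ I, !![A 0 0, A 0 1; 0, 0] ∈ I := by
    intro A hA
    have h := hmul !![1,0;0,0] A hA
    have : !![(1:NNReal),0;0,0] * A = !![A 0 0, A 0 1; 0, 0] := by
      ext i j; fin_cases i <;> fin_cases j <;>
        simp [Matrix.mul_apply, Fin.sum_univ_two]
    rwa [this] at h
  have hrow1 : ∀ A ∈ I, !![A 1 0, A 1 1; 0, 0] ∈ I := by
    intro A hA
    have h := hmul !![0,1;0,0] A hA
    have : !![(0:NNReal),1;0,0] * A = !![A 1 0, A 1 1; 0, 0] := by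
      ext i j; fin_cases i <;> fin_cases j <;>
        simp [Matrix.mul_apply, Fin.sum_univ_two]
    rwa [this] at h
  -- conversely, a matrix with both rows "in R" is in I
  have hofrows : ∀ x y z w : NNReal, !![x,y;0,0] ∈ I → !![z,w;0,0] ∈ I →
      !![x,y;z,w] ∈ I := by
    intro x y z w hx hz
    have h2 := hmul !![0,0;1,0] _ hz
    have e2 : !![(0:NNReal),0;1,0] * !![z,w;0,0] = !![0,0;z,w] := by
      ext i j; fin_cases i <;> fin_cases j <;>
        simp [Matrix.mul_apply, Fin.sum_univ_two]
    rw [e2] at h2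
    have h3 := hadd _ hx _ h2
    have e3 : !![x,y;0,0] + !![0,0;z,w] = !![x,y;z,w] := by
      ext i j; fin_cases i <;> fin_cases j <;> simp
    rwa [e3] at h3
  have memI : ∀ A : Matrix (Fin 2) (Fin 2) NNReal,
      A ∈ I ↔ (!![A 0 0, A 0 1; 0, 0] ∈ I ∧ !![A 1 0, A 1 1; 0, 0] ∈ I) := by
    intro A
    constructor
    · intro hA; exact ⟨hrow0 A hA, hrow1 A hA⟩
    · rintro ⟨h1, h2⟩
      have := hofrows _ _ _ _ h1 h2
      rwa [← Matrix.eta_fin_two A] at this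
  -- R is closed under scalar multiplication
  have hPsmul : ∀ c x y : NNReal, !![x,y;0,0] ∈ I → !![c*x, c*y; 0,0] ∈ I := by
    intro c x y hx
    have h := hmul !![c,0;0,0] _ hx
    have e : !![c,0;0,0] * !![x,y;0,0] = !![c*x, c*y; 0,0] := by
      ext i j; fin_cases i <;> fin_cases j <;>
        simp [Matrix.mul_apply, Fin.sum_univ_two]
    rwa [e] at h
  -- R is subtractive
  have hPsub : ∀ x y z w : NNReal, !![z,w;0,0] ∈ I → !![x+z, y+w; 0,0] ∈ I →
      !![x,y;0,0] ∈ I := by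
    intro x y z w hz hxz
    apply hsub !![x,y;0,0] !![z,w;0,0] hz
    have e : !![x,y;0,0] + !![z,w;0,0] = !![x+z, y+w; 0,0] := by
      ext i j; fin_cases i <;> fin_cases j <;> simp
    rwa [e]
  -- case split: is R trivial?
  by_cases htriv : ∀ x y : NNReal, !![x,y;0,0] ∈ I → x = 0 ∧ y = 0
  · left
    ext A
    simp only [Set.mem_singleton_iff]
    constructor
    · intro hA
      obtain ⟨h00, h01⟩ := htriv _ _ (hrow0 A hA)
      obtain ⟨h10, h11⟩ := htriv _ _ (hrow1 A hA)
      rw [Matrix.eta_fin_two A, h00, h01, h10, h11]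
      ext i j; fin_cases i <;> fin_cases j <;> simp
    · rintro rfl; exact h0
  · -- pick a nonzero element (u1, u2) of R
    push_neg at htriv
    obtain ⟨u1, u2, hu, hune⟩ := htriv
    -- dichotomy: all elements of R proportional to u, or R is everything
    by_cases hprop : ∀ x y : NNReal, !![x,y;0,0] ∈ I → x * u2 = y * u1
    · -- line case
      -- first: scalar multiples of u are in R
      have hray : ∀ t : NNReal, u2 ≠ 0 → !![(u1/u2)*t, t; 0,0] ∈ I := by
        intro t h2
        have := hPsmul (t/u2) u1 u2 hu
        have e1 : t/u2 * u2 = t := div_mul_cancel₀ t h2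
        have e2 : t/u2 * u1 = u1/u2 * t := by
          field_simp
        rwa [e1, e2] at this
      by_cases h2 : u2 = 0
      · -- u = (u1, 0), u1 ≠ 0 : E₁ case
        have h1 : u1 ≠ 0 := fun h => hune h h2
        right; right; left
        ext A
        simp only [Set.mem_setOf_eq]
        constructor
        · intro hA
          have e01 : A 0 1 = 0 := by
            have := hprop _ _ (hrow0 A hA)
            rw [h2, mul_zero] at this
            exact (mul_eq_zero.mp this.symm).resolve_right h1
          have e11 : A 1 1 = 0 := by
            have := hprop _ _ (hrow1 A hA)
            rw [h2, mul_zero] at this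
            exact (mul_eq_zero.mp this.symm).resolve_right h1
          exact ⟨A 0 0, A 1 0, by ext i j; fin_cases i <;> fin_cases j <;> simp [e01, e11]⟩
        · rintro ⟨a, b, rfl⟩
          have hx : ∀ t : NNReal, !![t, 0; 0, 0] ∈ I := by
            intro t
            have := hPsmul (t/u1) u1 u2 hu
            rw [h2, mul_zero, div_mul_cancel₀ t h1] at this
            exact this
          have := hofrows a 0 b 0 (hx a) (hx b)
          convert this using 2 <;> simp
      · by_cases h1 : u1 = 0
        · -- u = (0, u2), u2 ≠ 0 : E₂ case
          right; right; right; left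
          ext A
          simp only [Set.mem_setOf_eq]
          constructor
          · intro hA
            have e00 : A 0 0 = 0 := by
              have := hprop _ _ (hrow0 A hA)
              rw [h1, mul_zero] at this
              exact (mul_eq_zero.mp this).resolve_right h2
            have e10 : A 1 0 = 0 := by
              have := hprop _ _ (hrow1 A hA)
              rw [h1, mul_zero] at this
              exact (mul_eq_zero.mp this).resolve_right h2
            exact ⟨A 0 1, A 1 1, by ext i j; fin_cases i <;> fin_cases j <;> simp [e00, e10]⟩
          · rintro ⟨c, d, rfl⟩
            have hy : ∀ t : NNReal, !![0, t; 0, 0] ∈ I := by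
              intro t
              have := hPsmul (t/u2) u1 u2 hu
              rw [h1, mul_zero, div_mul_cancel₀ t h2] at this
              exact this
            have := hofrows 0 c 0 d (hy c) (hy d)
            convert this using 2 <;> simp
        · -- N_r case with r = u1 / u2
          right; right; right; right
          refine ⟨u1 / u2, by positivity, ?_⟩
          ext A
          simp only [Set.mem_setOf_eq]
          constructor
          · intro hA
            have e0 : A 0 0 = (u1/u2) * A 0 1 := by
              have := hprop _ _ (hrow0 A hA)
              calc A 0 0 = A 0 0 * u2 / u2 := by rw [mul_div_cancel_right₀ _ h2]
                _ = A 0 1 * u1 / u2 := by rw [this]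
                _ = u1 / u2 * A 0 1 := by rw [mul_div_assoc, mul_comm]
            have e1 : A 1 0 = (u1/u2) * A 1 1 := by
              have := hprop _ _ (hrow1 A hA)
              calc A 1 0 = A 1 0 * u2 / u2 := by rw [mul_div_cancel_right₀ _ h2]
                _ = A 1 1 * u1 / u2 := by rw [this]
                _ = u1 / u2 * A 1 1 := by rw [mul_div_assoc, mul_comm]
            exact ⟨A 0 1, A 1 1, by ext i j; fin_cases i <;> fin_cases j <;> simp [e0, e1]⟩
          · rintro ⟨a, b, rfl⟩
            have := hofrows _ _ _ _ (hray a h2) (hray b h2)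
            convert this using 2 <;> simp
    · -- full case: R = (ℝ⁺)², so I = univ
      right; left
      push_neg at hprop
      obtain ⟨v1, v2, hv, hne⟩ := hprop
      -- WLOG get p, q in R with q2 * p1 < q1 * p2 ... set Δ
      have key : ∀ (p1 p2 q1 q2 : NNReal), !![p1,p2;0,0] ∈ I → !![q1,q2;0,0] ∈ I →
          q1 * p2 < p1 * q2 →
          (!![p1*q2 - q1*p2, 0; 0, 0] ∈ I ∧ !![0, p1*q2 - q1*p2; 0, 0] ∈ I) := by
        intro p1 p2 q1 q2 hp hq hlt
        set Δ := p1*q2 - q1*p2 with hΔ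
        have hle : q1*p2 ≤ p1*q2 := le_of_lt hlt
        constructor
        · -- q2 • p = (Δ, 0) + p2 • q
          apply hPsub Δ 0 (p2*q1) (p2*q2)
          · exact hPsmul p2 q1 q2 hq
          · have eΔ : Δ + p2*q1 = q2*p1 := by
              rw [hΔ, mul_comm p2 q1, mul_comm q2 p1]
              exact tsub_add_cancel_of_le hle
            have e0 : (0:NNReal) + p2*q2 = q2*p2 := by rw [zero_add, mul_comm]
            rw [eΔ, e0]
            exact hPsmul q2 p1 p2 hp
        · -- q1 • p + (0, Δ) = p1 • q
          apply hPsub 0 Δ (q1*p1) (q1*p2)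
          · exact hPsmul q1 p1 p2 hp
          · have e0 : (0:NNReal) + q1*p1 = p1*q1 := by rw [zero_add, mul_comm]
            have eΔ : Δ + q1*p2 = p1*q2 := tsub_add_cancel_of_le hle
            rw [e0, eΔ]
            exact hPsmul p1 q1 q2 hq
      -- obtain a positive Δ with both axis vectors in R
      have haxes : ∃ Δ : NNReal, Δ ≠ 0 ∧ !![Δ, 0; 0, 0] ∈ I ∧ !![0, Δ; 0, 0] ∈ I := by
        rcases lt_or_gt_of_ne hne with h | h
        · -- h : v1 * u2 < v2 * u1, i.e. v1*u2 < u1*v2 : take p = u, q = v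
          have h' : v1 * u2 < u1 * v2 := by rwa [mul_comm u1 v2]
          obtain ⟨ha, hb⟩ := key u1 u2 v1 v2 hu hv h'
          exact ⟨u1*v2 - v1*u2, (tsub_pos_of_lt h').ne', ha, hb⟩
        · -- h : v2 * u1 < v1 * u2, i.e. u1*v2 < v1*u2 : take p = v, q = u
          have h' : u1 * v2 < v1 * u2 := by rw [mul_comm u1 v2]; exact h
          obtain ⟨ha, hb⟩ := key v1 v2 u1 u2 hv hu h'
          exact ⟨v1*u2 - u1*v2, (tsub_pos_of_lt h').ne', ha, hb⟩
      obtain ⟨Δ, hΔ0, hxΔ, hyΔ⟩ := haxes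
      have hall : ∀ x y : NNReal, !![x, y; 0, 0] ∈ I := by
        intro x y
        have hx := hPsmul (x/Δ) Δ 0 hxΔ
        rw [div_mul_cancel₀ x hΔ0, mul_zero] at hx
        have hy := hPsmul (y/Δ) 0 Δ hyΔ
        rw [div_mul_cancel₀ y hΔ0, mul_zero] at hy
        have := hadd _ hx _ hy
        have e : !![x,0;0,0] + !![0,y;0,0] = !![x,y;0,0] := by
          ext i j; fin_cases i <;> fin_cases j <;> simp
        rwa [e] at this
      ext A
      simp only [Set.mem_univ, iff_true]
      exact (memI A).mpr ⟨hall _ _, hall _ _⟩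
end

section
/- If S is an entire, cancellative, zerosumfree semiring (which is not necessarily a ring), then the only injective left S-semimodule is the zero semimodule. In particular, a divisible element argument: if I is an S-injective left S-semimodule and s ∈ S is not a zero divisor, then for every x ∈ I there exists y ∈ I with s·y = x. -/
/-!
Testing injectivity against `S ↪ S × S / ((a, b) ~ (c, d) ↔ a + d = c + b)`, the semimodule of formal
differences of `S`, extends `s ↦ s • a` and produces an additive inverse of `a`. Testing it against
`I ↪ WithTop I`, on which every nonzero scalar fixes `⊤`, extends the identity of `I` by a map `h`
whose value `z = h ⊤` absorbs everything: `x + z = h (x + ⊤) = z`. Adding `-z` gives `x = 0`.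
-/

def IsInjectiveSemimodule (S I : Type) [Semiring S] [AddCommMonoid I] [Module S I] : Prop :=
  ∀ (L M : Type) [AddCommMonoid L] [AddCommMonoid M] [Module S L] [Module S M]
    (f : L →ₗ[S] M), Function.Injective f →
      ∀ g : L →ₗ[S] I, ∃ h : M →ₗ[S] I, ∀ l : L, h (f l) = g l

section Difference

variable (S M : Type) [Semiring S] [AddCommMonoid M] [IsLeftCancelAdd M] [Module S M]

/-- `(a, b)` stands for the formal difference `a - b`. -/
def differenceCon : ModuleCon S (M × M) where
  r p q := p.1 + q.2 = q.1 + p.2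
  iseqv := by
    refine ⟨fun _ => rfl, Eq.symm, fun {p q r} hpq hqr => add_left_cancel (a := q.1 + q.2) ?_⟩
    calc (q.1 + q.2) + (p.1 + r.2) = (p.1 + q.2) + (q.1 + r.2) := by abel
      _ = (q.1 + p.2) + (r.1 + q.2) := by rw [hpq, hqr]
      _ = (q.1 + q.2) + (r.1 + p.2) := by abel
  add' {p q p' q'} hp hq := by
    change (p.1 + p'.1) + (q.2 + q'.2) = (q.1 + q'.1) + (p.2 + p'.2)
    calc (p.1 + p'.1) + (q.2 + q'.2) = (p.1 + q.2) + (p'.1 + q'.2) := by abel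
      _ = (q.1 + p.2) + (q'.1 + p'.2) := by rw [hp, hq]
      _ = (q.1 + q'.1) + (p.2 + p'.2) := by abel
  smul s {p q} h := by
    change s • p.1 + s • q.2 = s • q.1 + s • p.2
    rw [← smul_add, ← smul_add, h]

abbrev Difference : Type := (differenceCon S M).Quotient

def Difference.mkₗ : M × M →ₗ[S] Difference S M where
  toFun := Quotient.mk _
  map_add' _ _ := rfl
  map_smul' _ _ := rfl

def Difference.inl : M →ₗ[S] Difference S M := Difference.mkₗ S M ∘ₗ LinearMap.inl S M M

def Difference.inr : M →ₗ[S] Difference S M := Difference.mkₗ S M ∘ₗ LinearMap.inr S M M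

variable {S M}

theorem Difference.mkₗ_eq_mkₗ {p q : M × M} :
    Difference.mkₗ S M p = Difference.mkₗ S M q ↔ p.1 + q.2 = q.1 + p.2 :=
  Quotient.eq

theorem Difference.inl_injective : Function.Injective (Difference.inl S M) := fun m n h => by
  simpa [Difference.inl] using Difference.mkₗ_eq_mkₗ.1 h

theorem Difference.inl_add_inr_self (m : M) : Difference.inl S M m + Difference.inr S M m = 0 := by
  rw [Difference.inl, Difference.inr, LinearMap.comp_apply, LinearMap.comp_apply, ← map_add,
    ← map_zero (Difference.mkₗ S M), Difference.mkₗ_eq_mkₗ]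
  simp

end Difference

section WithTop

variable {S M : Type} [Semiring S] [AddCommMonoid M] [Module S M]

open Classical in
noncomputable def WithTop.absorbingSMul (s : S) (m : WithTop M) : WithTop M :=
  if s = 0 then 0 else m.map (s • ·)

theorem WithTop.absorbingSMul_coe (s : S) (x : M) :
    WithTop.absorbingSMul s (x : WithTop M) = ↑(s • x) := by
  by_cases hs : s = 0 <;> simp [WithTop.absorbingSMul, hs]

theorem WithTop.absorbingSMul_top {s : S} (hs : s ≠ 0) :
    WithTop.absorbingSMul s (⊤ : WithTop M) = ⊤ := by
  simp [WithTop.absorbingSMul, hs]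

theorem WithTop.zero_absorbingSMul (m : WithTop M) : WithTop.absorbingSMul (0 : S) m = 0 := by
  simp [WithTop.absorbingSMul]

noncomputable abbrev WithTop.absorbingModule [NoZeroDivisors S] [Nontrivial S]
    (hS : ∀ s t : S, s + t = 0 → s = 0) : Module S (WithTop M) where
  smul := WithTop.absorbingSMul
  one_smul m := by
    change absorbingSMul 1 m = m
    cases m <;> simp [absorbingSMul_coe, absorbingSMul_top]
  mul_smul s t m := by
    change absorbingSMul (s * t) m = absorbingSMul s (absorbingSMul t m)
    by_cases hs : s = 0
    · simp [hs, zero_absorbingSMul]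
    by_cases ht : t = 0
    · simp [ht, zero_absorbingSMul, ← WithTop.coe_zero, absorbingSMul_coe]
    cases m <;> simp [absorbingSMul_coe, absorbingSMul_top, hs, ht, mul_smul]
  smul_zero s := absorbingSMul_coe s 0 |>.trans (by rw [smul_zero]; rfl)
  smul_add s m n := by
    change absorbingSMul s (m + n) = absorbingSMul s m + absorbingSMul s n
    by_cases hs : s = 0
    · simp [hs, zero_absorbingSMul]
    cases m <;> cases n <;> simp [absorbingSMul_coe, absorbingSMul_top, hs, ← WithTop.coe_add]
  add_smul s t m := by
    change absorbingSMul (s + t) m = absorbingSMul s m + absorbingSMul t m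
    by_cases hs : s = 0
    · simp [hs, zero_absorbingSMul]
    have hst : s + t ≠ 0 := fun h => hs (hS s t h)
    cases m <;> simp [absorbingSMul_coe, absorbingSMul_top, hs, hst, add_smul]
  zero_smul := WithTop.zero_absorbingSMul

end WithTop

theorem IsInjectiveSemimodule.exists_add_eq_zero {S I : Type} [Semiring S] [IsLeftCancelAdd S]
    [AddCommMonoid I] [Module S I] (hI : IsInjectiveSemimodule S I) (a : I) :
    ∃ b : I, a + b = 0 := by
  obtain ⟨h, hh⟩ := hI S (Difference S S) (Difference.inl S S) Difference.inl_injective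
    (LinearMap.toSpanSingleton S I a)
  refine ⟨h (Difference.inr S S 1), ?_⟩
  rw [← LinearMap.toSpanSingleton_apply_one S I a, ← hh 1, ← map_add,
    Difference.inl_add_inr_self, map_zero]

theorem IsInjectiveSemimodule.exists_absorbing {S I : Type} [Semiring S] [NoZeroDivisors S]
    [Nontrivial S] (hS : ∀ s t : S, s + t = 0 → s = 0) [AddCommMonoid I] [Module S I]
    (hI : IsInjectiveSemimodule S I) : ∃ z : I, ∀ x : I, x + z = z := by
  let _ := WithTop.absorbingModule (M := I) hS
  let ι : I →ₗ[S] WithTop I :=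
    { toFun := WithTop.some
      map_add' := WithTop.coe_add
      map_smul' s x := (WithTop.absorbingSMul_coe s x).symm }
  obtain ⟨h, hh⟩ := hI I (WithTop I) ι WithTop.coe_injective LinearMap.id
  refine ⟨h ⊤, fun x => ?_⟩
  calc x + h ⊤ = h (ι x) + h ⊤ := by rw [hh x, LinearMap.id_apply]
    _ = h (ι x + ⊤) := (map_add h _ _).symm
    _ = h ⊤ := by rw [WithTop.add_top]

theorem IsInjectiveSemimodule.subsingleton {S I : Type} [Semiring S] [IsLeftCancelAdd S]
    [NoZeroDivisors S] [Nontrivial S] (hS : ∀ s t : S, s + t = 0 → s = 0) [AddCommMonoid I]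
    [Module S I] (hI : IsInjectiveSemimodule S I) : Subsingleton I := by
  obtain ⟨z, hz⟩ := hI.exists_absorbing hS
  obtain ⟨w, hw⟩ := hI.exists_add_eq_zero z
  refine subsingleton_of_forall_eq 0 fun x => ?_
  rw [← hw, ← hz x, add_assoc, hw, add_zero]

/-- If `S` is an entire, cancellative, zerosumfree semiring, then the only injective
left `S`-semimodule is `{0}`; in particular any injective semimodule is divisible by
every non-zero-divisor. -/
theorem stmt_12 {S I : Type} [Semiring S] (hnt : (0 : S) ≠ 1)
    (hentire : ∀ a b : S, a * b = 0 → a = 0 ∨ b = 0)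
    (hcanc : ∀ a b c : S, a + b = a + c → b = c)
    (hzsf : ∀ a b : S, a + b = 0 → a = 0 ∧ b = 0)
    [AddCommMonoid I] [Module S I]
    (hinj : ∀ (L M : Type) [AddCommMonoid L] [AddCommMonoid M] [Module S L] [Module S M]
      (f : L →ₗ[S] M), Function.Injective f →
        ∀ g : L →ₗ[S] I, ∃ h : M →ₗ[S] I, ∀ l : L, h (f l) = g l) :
    (∀ x : I, x = 0) ∧
    (∀ s ∈ nonZeroDivisors S, ∀ x : I, ∃ y : I, s • y = x) := by
  have : IsLeftCancelAdd S := ⟨fun a _ _ => hcanc a _ _⟩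
  have : NoZeroDivisors S := ⟨fun h => hentire _ _ h⟩
  have : Nontrivial S := ⟨⟨0, 1, hnt⟩⟩
  have hI : Subsingleton I :=
    IsInjectiveSemimodule.subsingleton (fun a b h => (hzsf a b h).1) hinj
  exact ⟨fun x => Subsingleton.elim x 0, fun _ _ x => ⟨x, Subsingleton.elim _ _⟩⟩
end

section
/- Every commutative monoid can be embedded via a subtractive (normal) monomorphism into a divisible commutative monoid. -/
open scoped NNRat Classical

namespace Stmt14Aux

noncomputable def fr (q : ℚ≥0) : ℚ≥0 := q - ⌊q⌋₊

lemma floor_add_fr (q : ℚ≥0) : (⌊q⌋₊ : ℚ≥0) + fr q = q :=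
  add_tsub_cancel_of_le (Nat.floor_le zero_le)

lemma fr_natCast_add (n : ℕ) (r : ℚ≥0) : fr ((n : ℚ≥0) + r) = fr r := by
  unfold fr
  rw [add_comm, Nat.floor_add_natCast zero_le, Nat.cast_add,
    add_comm ((⌊r⌋₊ : ℚ≥0)) ((n : ℚ≥0)), add_comm r ((n : ℚ≥0)),
    add_tsub_add_eq_tsub_left]

lemma fr_zero : fr 0 = 0 := by simp [fr]

lemma fr_one : fr 1 = 0 := by simp [fr]

lemma floor_add (p q : ℚ≥0) : ⌊p + q⌋₊ = ⌊p⌋₊ + ⌊q⌋₊ + ⌊fr p + fr q⌋₊ := by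
  conv_lhs => rw [← floor_add_fr p, ← floor_add_fr q]
  rw [show (⌊p⌋₊:ℚ≥0) + fr p + ((⌊q⌋₊:ℚ≥0) + fr q)
      = (fr p + fr q) + ((⌊p⌋₊ + ⌊q⌋₊ : ℕ) : ℚ≥0) by push_cast; ring,
    Nat.floor_add_natCast zero_le]
  omega

lemma fr_add (p q : ℚ≥0) : fr (p + q) = fr (fr p + fr q) := by
  conv_lhs => rw [← floor_add_fr p, ← floor_add_fr q]
  rw [show (⌊p⌋₊:ℚ≥0) + fr p + ((⌊q⌋₊:ℚ≥0) + fr q)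
      = ((⌊p⌋₊ + ⌊q⌋₊ : ℕ) : ℚ≥0) + (fr p + fr q) by push_cast; ring,
    fr_natCast_add]

variable {B : Type} [AddCommMonoid B]

lemma fr_single_one (y x : B) : fr ((Finsupp.single y (1:ℚ≥0)) x) = 0 := by
  rcases eq_or_ne y x with h | h <;> simp [Finsupp.single_apply, h, fr_zero, fr_one]

noncomputable def sig (f : B →₀ ℚ≥0) : B := ∑ x ∈ f.support, ⌊f x⌋₊ • x

lemma sig_eq_sum (f : B →₀ ℚ≥0) {s : Finset B} (hs : f.support ⊆ s) :
    sig f = ∑ x ∈ s, ⌊f x⌋₊ • x := by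
  refine Finset.sum_subset hs fun x _ hx => ?_
  rw [Finsupp.notMem_support_iff.mp hx]
  simp

lemma sig_add (f g : B →₀ ℚ≥0) :
    sig (f + g) = sig f + sig g
      + ∑ x ∈ f.support ∪ g.support, ⌊fr (f x) + fr (g x)⌋₊ • x := by
  rw [sig_eq_sum (f + g) Finsupp.support_add,
    sig_eq_sum f Finset.subset_union_left,
    sig_eq_sum g Finset.subset_union_right]
  have : ∀ x ∈ f.support ∪ g.support,
      ⌊(f + g) x⌋₊ • x = ⌊f x⌋₊ • x + ⌊g x⌋₊ • x + ⌊fr (f x) + fr (g x)⌋₊ • x := by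
    intro x _
    rw [Finsupp.add_apply, floor_add, add_smul, add_smul]
  rw [Finset.sum_congr rfl this, Finset.sum_add_distrib, Finset.sum_add_distrib]

lemma sig_single (b : B) : sig (Finsupp.single b 1) = b := by
  rw [sig, Finsupp.support_single_ne_zero b one_ne_zero]
  simp

noncomputable def c : AddCon (B →₀ ℚ≥0) where
  r f g := (∀ x, fr (f x) = fr (g x)) ∧ sig f = sig g
  iseqv := ⟨fun f => ⟨fun _ => rfl, rfl⟩,
    fun h => ⟨fun x => (h.1 x).symm, h.2.symm⟩,
    fun h h' => ⟨fun x => (h.1 x).trans (h'.1 x), h.2.trans h'.2⟩⟩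
  add' := by
    rintro f f' g g' ⟨hf1, hf2⟩ ⟨hg1, hg2⟩
    constructor
    · intro x
      rw [Finsupp.add_apply, Finsupp.add_apply, fr_add, hf1 x, hg1 x, ← fr_add]
    · rw [sig_add, sig_add, hf2, hg2]
      congr 1
      have key : ∀ x, ⌊fr (f x) + fr (g x)⌋₊ • x = ⌊fr (f' x) + fr (g' x)⌋₊ • x := by
        intro x; rw [hf1 x, hg1 x]
      have hz : ∀ x ∉ f.support ∪ g.support, ⌊fr (f x) + fr (g x)⌋₊ • x = 0 := by
        intro x hx
        simp only [Finset.mem_union, Finsupp.mem_support_iff, not_or, not_not] at hx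
        rw [hx.1, hx.2, fr_zero]; simp
      have hz' : ∀ x ∉ f'.support ∪ g'.support, ⌊fr (f' x) + fr (g' x)⌋₊ • x = 0 := by
        intro x hx
        simp only [Finset.mem_union, Finsupp.mem_support_iff, not_or, not_not] at hx
        rw [hx.1, hx.2, fr_zero]; simp
      rw [Finset.sum_subset (Finset.subset_union_left
          (s₂ := f'.support ∪ g'.support)) (fun x _ hx => hz x hx)]
      rw [Finset.sum_subset (Finset.subset_union_right
          (s₁ := f.support ∪ g.support)) (fun x _ hx => hz' x hx)]
      exact Finset.sum_congr rfl fun x _ => key x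

lemma sig_add_single (f : B →₀ ℚ≥0) (b : B) (hf : ∀ x, fr (f x) = 0) :
    sig (f + Finsupp.single b 1) = sig f + b := by
  rw [sig_add, sig_single]
  have : ∀ x ∈ f.support ∪ (Finsupp.single b (1:ℚ≥0)).support,
      ⌊fr (f x) + fr ((Finsupp.single b (1:ℚ≥0)) x)⌋₊ • x = 0 := by
    intro x _
    rw [hf x, fr_single_one, add_zero]; simp
  rw [Finset.sum_eq_zero this, add_zero]

noncomputable def emb : B →+ (c (B := B)).Quotient where
  toFun b := (c (B := B)).mk' (Finsupp.single b 1)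
  map_zero' := by
    rw [← map_zero (c (B := B)).mk']
    refine (AddCon.eq _).mpr ⟨fun x => ?_, ?_⟩
    · rw [fr_single_one]; simp [fr_zero]
    · rw [sig_single]; simp [sig]
  map_add' b b' := by
    rw [← map_add (c (B := B)).mk']
    refine (AddCon.eq _).mpr ⟨fun x => ?_, ?_⟩
    · rw [fr_single_one, Finsupp.add_apply, fr_add, fr_single_one, fr_single_one,
        add_zero, fr_zero]
    · rw [sig_single, sig_add_single _ _ (fun x => fr_single_one b x), sig_single]

lemma emb_apply (b : B) : emb b = (c (B := B)).mk' (Finsupp.single b 1) := rfl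

end Stmt14Aux

open Stmt14Aux in
/-- Every commutative monoid embeds via a subtractive (normal) monomorphism into a
divisible commutative monoid. -/
theorem stmt_14 (B : Type) [AddCommMonoid B] :
    ∃ (P : Type) (_ : AddCommMonoid P) (g : B →+ P),
      Function.Injective g ∧
      (∀ n : ℕ, n ≠ 0 → ∀ d : P, ∃ d' : P, n • d' = d) ∧
      (∀ (p : P) (b b' : B), p + g b = g b' → ∃ b'' : B, g b'' = p) := by
  classical
  refine ⟨(c (B := B)).Quotient, inferInstance, emb, ?_, ?_, ?_⟩
  · intro b b' h
    rw [emb_apply, emb_apply] at h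
    have h2 := ((AddCon.eq _).mp h).2
    rwa [sig_single, sig_single] at h2
  · intro n hn d
    obtain ⟨f, rfl⟩ := (c (B := B)).mk'_surjective d
    refine ⟨(c (B := B)).mk' (f.mapRange (· / (n : ℚ≥0)) (by simp)), ?_⟩
    rw [← map_nsmul]
    congr 1
    ext x
    have hx : ((n • f.mapRange (· / (n : ℚ≥0)) (by simp)) x)
        = n • ((f.mapRange (· / (n : ℚ≥0)) (by simp)) x) :=
      (Finsupp.applyAddHom (M := ℚ≥0) x).map_nsmul n _
    rw [hx, Finsupp.mapRange_apply, nsmul_eq_mul, mul_div_cancel₀]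
    exact_mod_cast hn
  · intro p b b' h
    obtain ⟨f, rfl⟩ := (c (B := B)).mk'_surjective p
    rw [emb_apply, emb_apply, ← map_add (c (B := B)).mk'] at h
    have hrel := (AddCon.eq _).mp h
    have hfr : ∀ x, fr (f x) = 0 := by
      intro x
      have hx := hrel.1 x
      rw [fr_single_one] at hx
      rcases eq_or_ne x b with hxb | hxb
      · rw [hxb] at hx ⊢
        rw [Finsupp.add_apply, Finsupp.single_apply, if_pos rfl,
          show f b + 1 = ((1:ℕ) : ℚ≥0) + f b by push_cast; ring,
          fr_natCast_add] at hx
        exact hx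
      · rwa [Finsupp.add_apply, Finsupp.single_apply, if_neg (Ne.symm hxb),
          add_zero] at hx
    refine ⟨sig f, ?_⟩
    rw [emb_apply]
    refine (AddCon.eq _).mpr ⟨fun x => ?_, ?_⟩
    · rw [fr_single_one, hfr x]
    · rw [sig_single]
end

section
/- Every left S-semimodule M embeds (as S-semimodules) into Hom_{ℤ⁺}(S, D) for some divisible commutative monoid D, where Hom_{ℤ⁺}(S, D) is the commutative monoid of additive monoid homomorphisms S → D with left S-action (s·f)(t) = f(ts). -/
open scoped NNRat
open Finsupp

namespace Stmt15Aux

lemma floor_add_frQ (q : ℚ≥0) : (⌊q⌋₊ : ℚ≥0) + (q - ⌊q⌋₊) = q :=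
  add_tsub_cancel_of_le (Nat.floor_le zero_le)

lemma aux_floor (a b : ℕ) (u v : ℚ≥0) :
    ⌊((a : ℚ≥0) + u) + ((b : ℚ≥0) + v)⌋₊ = a + b + ⌊u + v⌋₊ := by
  have h : ((a : ℚ≥0) + u) + ((b : ℚ≥0) + v) = (u + v) + ((a + b : ℕ) : ℚ≥0) := by
    push_cast; ring
  rw [h, Nat.floor_add_natCast zero_le]
  omega

lemma aux_frac (a b : ℕ) (u v : ℚ≥0) :
    (((a : ℚ≥0) + u) + ((b : ℚ≥0) + v)) - (⌊((a : ℚ≥0) + u) + ((b : ℚ≥0) + v)⌋₊ : ℚ≥0)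
      = (u + v) - (⌊u + v⌋₊ : ℚ≥0) := by
  rw [aux_floor]
  have h1 : ((a : ℚ≥0) + u) + ((b : ℚ≥0) + v) = ((a + b : ℕ) : ℚ≥0) + (u + v) := by
    push_cast; ring
  have h2 : ((a + b + ⌊u + v⌋₊ : ℕ) : ℚ≥0)
      = ((a + b : ℕ) : ℚ≥0) + ((⌊u + v⌋₊ : ℕ) : ℚ≥0) := by
    push_cast; ring
  rw [h1, h2, add_tsub_add_eq_tsub_left]

lemma floor_add (q r : ℚ≥0) :
    ⌊q + r⌋₊ = ⌊q⌋₊ + ⌊r⌋₊ + ⌊(q - ⌊q⌋₊) + (r - ⌊r⌋₊)⌋₊ :=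
  calc ⌊q + r⌋₊
      = ⌊((⌊q⌋₊ : ℚ≥0) + (q - ⌊q⌋₊)) + ((⌊r⌋₊ : ℚ≥0) + (r - ⌊r⌋₊))⌋₊ := by
        rw [floor_add_frQ, floor_add_frQ]
    _ = ⌊q⌋₊ + ⌊r⌋₊ + ⌊(q - ⌊q⌋₊) + (r - ⌊r⌋₊)⌋₊ := aux_floor _ _ _ _

lemma frQ_add (q r : ℚ≥0) :
    (q + r) - (⌊q + r⌋₊ : ℚ≥0) =
      ((q - ⌊q⌋₊) + (r - ⌊r⌋₊)) - (⌊(q - ⌊q⌋₊) + (r - ⌊r⌋₊)⌋₊ : ℚ≥0) :=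
  calc (q + r) - (⌊q + r⌋₊ : ℚ≥0)
      = (((⌊q⌋₊ : ℚ≥0) + (q - ⌊q⌋₊)) + ((⌊r⌋₊ : ℚ≥0) + (r - ⌊r⌋₊)))
        - (⌊((⌊q⌋₊ : ℚ≥0) + (q - ⌊q⌋₊)) + ((⌊r⌋₊ : ℚ≥0) + (r - ⌊r⌋₊))⌋₊ : ℚ≥0) := by
        rw [floor_add_frQ, floor_add_frQ]
    _ = ((q - ⌊q⌋₊) + (r - ⌊r⌋₊)) - (⌊(q - ⌊q⌋₊) + (r - ⌊r⌋₊)⌋₊ : ℚ≥0) :=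
        aux_frac _ _ _ _

variable {M : Type} [AddCommMonoid M]

/-- the "presentation" monoid -/
abbrev Pre (M : Type) [AddCommMonoid M] : Type := M × (M →₀ ℚ≥0)

/-- generating relation: `d` is identified with the formal symbol `1 • x_d` -/
def gen (M : Type) [AddCommMonoid M] : Pre M → Pre M → Prop :=
  fun x y => ∃ d : M, x = (d, 0) ∧ y = (0, Finsupp.single d 1)

/-- fractional part, applied pointwise -/
noncomputable def fr (f : M →₀ ℚ≥0) : M →₀ ℚ≥0 :=
  f.mapRange (fun q => q - ⌊q⌋₊) (by simp)

lemma fr_apply (f : M →₀ ℚ≥0) (d : M) : fr f d = f d - ⌊f d⌋₊ := by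
  simp [fr]

/-- integral part, pushed down to `M` -/
noncomputable def phi (f : M →₀ ℚ≥0) : M := f.sum fun d q => ⌊q⌋₊ • d

lemma phi_eq (f : M →₀ ℚ≥0) {s : Finset M} (h : f.support ⊆ s) :
    phi f = ∑ d ∈ s, ⌊f d⌋₊ • d :=
  Finsupp.sum_of_support_subset f h _ (by simp)

/-- the normal-form map -/
noncomputable def psi (x : Pre M) : Pre M := (x.1 + phi x.2, fr x.2)

lemma psi_add_psi (x y : Pre M) : psi (x + y) = psi (psi x + psi y) := by
  classical
  obtain ⟨m, f⟩ := x
  obtain ⟨m', g⟩ := y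
  have hf : f.support ⊆ f.support ∪ g.support := Finset.subset_union_left
  have hg : g.support ⊆ f.support ∪ g.support := Finset.subset_union_right
  have hfg : (f + g).support ⊆ f.support ∪ g.support := Finsupp.support_add
  have hfr : (fr f + fr g).support ⊆ f.support ∪ g.support :=
    Finsupp.support_add.trans
      (Finset.union_subset_union Finsupp.support_mapRange Finsupp.support_mapRange)
  have key : phi (f + g) = (phi f + phi g) + phi (fr f + fr g) := by
    rw [phi_eq (f + g) hfg, phi_eq f hf, phi_eq g hg, phi_eq (fr f + fr g) hfr,
      ← Finset.sum_add_distrib, ← Finset.sum_add_distrib]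
    refine Finset.sum_congr rfl fun d _ => ?_
    rw [Finsupp.add_apply, floor_add, Finsupp.add_apply, fr_apply, fr_apply,
      add_smul, add_smul]
  have key2 : fr (f + g) = fr (fr f + fr g) := by
    ext d
    rw [fr_apply, fr_apply, Finsupp.add_apply, Finsupp.add_apply, fr_apply, fr_apply,
      frQ_add]
  simp only [psi, Prod.mk_add_mk, key, key2, Prod.mk.injEq]
  exact ⟨by abel, trivial⟩

/-- the additive congruence whose classes are the fibers of `psi` -/
noncomputable def psiCon (M : Type) [AddCommMonoid M] : AddCon (Pre M) where
  r x y := psi x = psi y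
  iseqv := ⟨fun _ => rfl, Eq.symm, Eq.trans⟩
  add' := by
    intro w x y z h1 h2
    show psi (w + y) = psi (x + z)
    rw [psi_add_psi w y, h1, h2, ← psi_add_psi]

/-- the congruence we quotient by -/
noncomputable def C (M : Type) [AddCommMonoid M] : AddCon (Pre M) := addConGen (gen M)

lemma C_of_gen {x y : Pre M} (h : gen M x y) : C M x y :=
  AddConGen.Rel.of x y h

lemma psi_single (d : M) : psi ((0, Finsupp.single d 1) : Pre M) = (d, 0) := by
  have h1 : phi (Finsupp.single d 1) = d := by
    rw [phi, Finsupp.sum_single_index (by simp)]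
    norm_num
  have h2 : fr (Finsupp.single d 1) = 0 := by
    rw [fr, Finsupp.mapRange_single]
    norm_num
  rw [psi, h1, h2, zero_add]

lemma psi_inl (m : M) : psi ((m, 0) : Pre M) = (m, 0) := by
  rw [psi]
  have h1 : phi (0 : M →₀ ℚ≥0) = 0 := by simp [phi]
  have h2 : fr (0 : M →₀ ℚ≥0) = 0 := by
    ext d; rw [fr_apply]; simp
  rw [h1, h2, add_zero]

lemma psi_eq_of_C {x y : Pre M} (h : C M x y) : psi x = psi y := by
  refine (AddCon.addConGen_le (c := psiCon M)).2 ?_ h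
  rintro x y ⟨d, rfl, rfl⟩
  show psi ((d, 0) : Pre M) = psi ((0, Finsupp.single d 1) : Pre M)
  rw [psi_single, psi_inl]

/-- the divisible monoid -/
noncomputable def D (M : Type) [AddCommMonoid M] : Type := (C M).Quotient

noncomputable instance : AddCommMonoid (D M) :=
  inferInstanceAs (AddCommMonoid (C M).Quotient)

/-- the embedding of `M` -/
noncomputable def mu : M →+ D M where
  toFun m := (C M).mk' (m, 0)
  map_zero' := by simp; rfl
  map_add' m m' := by
    show (C M).mk' (m + m', 0) = (C M).mk' (m, 0) + (C M).mk' (m', 0)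
    rw [← map_add, Prod.mk_add_mk, add_zero]

lemma mu_injective : Function.Injective (mu (M := M)) := by
  intro m m' h
  have h2 : C M (m, 0) (m', 0) := (AddCon.eq _).mp h
  have h3 := psi_eq_of_C h2
  rw [psi_inl, psi_inl, Prod.mk.injEq] at h3
  exact h3.1

lemma mu_divisible (n : ℕ) (hn : n ≠ 0) (d : D M) : ∃ d', n • d' = d := by
  obtain ⟨⟨m, f⟩, rfl⟩ := AddCon.mk'_surjective d
  set g : M →₀ ℚ≥0 := Finsupp.single m 1 + f with hgdef
  have h1 : C M (m, f) (0, g) := by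
    have h0 : C M (m, 0) (0, Finsupp.single m 1) := C_of_gen ⟨m, rfl, rfl⟩
    have h := (C M).add h0 ((C M).refl ((0, f) : Pre M))
    simpa using h
  set k : M →₀ ℚ≥0 := g.mapRange (fun q => q / n) (by simp) with hkdef
  have hk : n • k = g := by
    ext a
    have h4 := map_nsmul (Finsupp.applyAddHom (M := ℚ≥0) a) n k
    simp only [Finsupp.applyAddHom_apply] at h4
    rw [h4, hkdef, Finsupp.mapRange_apply, nsmul_eq_mul,
      mul_div_cancel₀ _ (by exact_mod_cast hn : (n : ℚ≥0) ≠ 0)]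
  have hsmul : n • ((0, k) : Pre M) = ((0, g) : Pre M) := by
    have h5 := map_nsmul (AddMonoidHom.inr M (M →₀ ℚ≥0)) n k
    simp only [AddMonoidHom.inr_apply] at h5
    rw [← h5, hk]
  refine ⟨(C M).mk' (0, k), ?_⟩
  calc n • (C M).mk' ((0, k) : Pre M)
      = (C M).mk' (n • ((0, k) : Pre M)) := (map_nsmul _ _ _).symm
    _ = (C M).mk' ((0, g) : Pre M) := by rw [hsmul]
    _ = (C M).mk' ((m, f) : Pre M) := (AddCon.eq _).mpr ((C M).symm h1)

end Stmt15Aux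

open Stmt15Aux in
/-- Every left `S`-semimodule `M` embeds `S`-linearly into `Hom_{ℤ⁺}(S, D)` for some
divisible commutative monoid `D`, where the `S`-action is `(s • f) t = f (t * s)`. -/
theorem stmt_15 {S M : Type} [Semiring S] [AddCommMonoid M] [Module S M] :
    ∃ (D : Type) (_ : AddCommMonoid D),
      (∀ n : ℕ, n ≠ 0 → ∀ d : D, ∃ d' : D, n • d' = d) ∧
      ∃ ε : M →+ (S →+ D), Function.Injective ε ∧
        ∀ (s : S) (m : M) (t : S), ε (s • m) t = ε m (t * s) := by
  let ε0 : M → (S →+ D M) := fun m =>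
    { toFun := fun s => mu (s • m)
      map_zero' := by
        show mu ((0 : S) • m) = 0
        rw [zero_smul, map_zero]
      map_add' := fun s t => by
        show mu ((s + t) • m) = mu (s • m) + mu (t • m)
        rw [add_smul, map_add] }
  have hε0 : ∀ (m : M) (s : S), ε0 m s = mu (s • m) := fun _ _ => rfl
  let ε : M →+ (S →+ D M) :=
    { toFun := ε0
      map_zero' := by ext s; simp [hε0]
      map_add' := fun m m' => by ext s; simp [hε0, smul_add] }
  refine ⟨D M, inferInstance, fun n hn d => mu_divisible n hn d, ε, ?_, ?_⟩
  · intro m m' h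
    have h1 : mu ((1 : S) • m) = mu ((1 : S) • m') := DFunLike.congr_fun h 1
    rw [one_smul, one_smul] at h1
    exact mu_injective h1
  · intro s m t
    show mu (t • s • m) = mu ((t * s) • m)
    rw [mul_smul]
end

section
/- Every divisible commutative monoid D is ℤ⁺-i-injective: for every subtractive submonoid I of (ℤ⁺, +) (i.e., a subtractive ideal, which is of the form kℤ⁺) and every monoid homomorphism g: I → D, there exists a monoid homomorphism h: ℤ⁺ → D extending g. -/
/-!
A subtractive submonoid `I` of `ℕ` consists of the multiples of its least positive element `k`:
for `x ∈ I` the remainder `x % k` lies in `I` by subtractivity and is smaller than `k`.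
Hence `n ↦ n • d` extends `g` as soon as `k • d = g k`, and such a `d` exists by divisibility
(for `k = 0` take `d = 0`).
-/

theorem Nat.exists_mem_forall_dvd_of_subtractive (I : AddSubmonoid ℕ)
    (hI : ∀ x i : ℕ, i ∈ I → x + i ∈ I → x ∈ I) : ∃ k ∈ I, ∀ x ∈ I, k ∣ x := by
  classical
  by_cases hpos : ∃ n, n ∈ I ∧ n ≠ 0
  · set k := Nat.find hpos
    obtain ⟨hkI, hk0⟩ : k ∈ I ∧ k ≠ 0 := Nat.find_spec hpos
    refine ⟨k, hkI, fun x hx => Nat.dvd_of_mod_eq_zero ?_⟩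
    have hmod : x % k ∈ I := by
      refine hI _ (k * (x / k)) ?_ (by rwa [Nat.mod_add_div])
      simpa [mul_comm] using I.nsmul_mem hkI (x / k)
    by_contra hne
    exact Nat.find_min hpos (Nat.mod_lt x (Nat.pos_of_ne_zero hk0)) ⟨hmod, hne⟩
  · push Not at hpos
    exact ⟨0, I.zero_mem, fun x hx => by simp [hpos x hx]⟩

theorem multiplesHom_apply_eq_of_forall_dvd {D : Type*} [AddCommMonoid D] {I : AddSubmonoid ℕ}
    (g : I →+ D) {k : ℕ} (hk : k ∈ I) (hdvd : ∀ x ∈ I, k ∣ x) {d : D}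
    (hd : k • d = g ⟨k, hk⟩) (x : I) : multiplesHom D d x = g x := by
  obtain ⟨c, hc⟩ := hdvd x x.2
  have hx : x = c • ⟨k, hk⟩ := Subtype.ext (by simp [hc, mul_comm])
  rw [hx, map_nsmul, ← hd]
  simp [mul_smul]

/-- Every divisible commutative monoid is `ℤ⁺`-`i`-injective: homomorphisms from a
subtractive submonoid of `ℕ` extend to all of `ℕ`. -/
theorem stmt_16 {D : Type*} [AddCommMonoid D]
    (hdiv : ∀ n : ℕ, n ≠ 0 → ∀ d : D, ∃ d' : D, n • d' = d)
    (I : AddSubmonoid ℕ) (hI : ∀ x i : ℕ, i ∈ I → x + i ∈ I → x ∈ I)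
    (g : I →+ D) :
    ∃ h : ℕ →+ D, ∀ x : I, h (x : ℕ) = g x := by
  obtain ⟨k, hkI, hdvd⟩ := Nat.exists_mem_forall_dvd_of_subtractive I hI
  obtain ⟨d, hd⟩ : ∃ d : D, k • d = g ⟨k, hkI⟩ := by
    rcases eq_or_ne k 0 with rfl | hk0
    · exact ⟨0, by rw [zero_smul]; exact (map_zero g).symm⟩
    · exact hdiv k hk0 _
  exact ⟨multiplesHom D d, multiplesHom_apply_eq_of_forall_dvd g hkI hdvd hd⟩
end

section
/- Let γ: T → S be a morphism of semirings, M a left S-semimodule, and A a left T-semimodule that is M-i-injective as a T-semimodule (viewing M as a T-semimodule via γ). Then Hom_T(S, A), with left S-action (s·f)(t) = f(ts), is M-i-injective as a left S-semimodule: every S-linear map from a subtractive S-subsemimodule K of M to Hom_T(S, A) extends to an S-linear map M → Hom_T(S, A). -/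
/-!
Under the adjunction `Hom_S(K, Hom_T(S, A)) ≅ Hom_T(K, A)`, an `S`-linear `g : K → Hom_T(S, A)`
corresponds to the `T`-linear map `k ↦ g k 1`. Extending the latter along the normal monomorphism
`K ↪ M` by the injectivity of `A` gives a `T`-linear `h₀ : M → A`, and its adjoint
`m ↦ (x ↦ h₀ (x • m))` is the required `S`-linear extension of `g`.
-/

/-- A map `f : S →+ A` is `T`-linear with respect to `γ : T → S`, i.e. a morphism in
`Hom_T(S, A)` where `S` is viewed as a `T`-`S`-bisemimodule via `γ`. -/
def IsTLinear {T S A : Type*} [Semiring T] [Semiring S] [AddCommMonoid A] [Module T A]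
    (γ : T →+* S) (f : S →+ A) : Prop :=
  ∀ (t : T) (s : S), f (γ t * s) = t • f s

section Coinduction

variable {T S M A : Type*} [Semiring T] [Semiring S] [AddCommMonoid M] [Module S M]
  [AddCommMonoid A] [Module T A]

def coinduce (h₀ : M →+ A) : M →+ S →+ A :=
  (smulAddHom S M).flip.compr₂ h₀

@[simp]
theorem coinduce_apply (h₀ : M →+ A) (m : M) (x : S) : coinduce h₀ m x = h₀ (x • m) :=
  rfl

theorem isTLinear_coinduce (γ : T →+* S) {h₀ : M →+ A}
    (hh₀ : ∀ (t : T) (m : M), h₀ (γ t • m) = t • h₀ m) (m : M) :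
    IsTLinear γ (coinduce h₀ m) := fun t x => by
  rw [coinduce_apply, coinduce_apply, mul_smul, hh₀]

theorem coinduce_smul_apply (h₀ : M →+ A) (s : S) (m : M) (x : S) :
    coinduce h₀ (s • m) x = coinduce h₀ m (x * s) := by
  rw [coinduce_apply, coinduce_apply, mul_smul]

theorem coinduce_eq_of_eq_apply_one {K : Submodule S M} {g : K →+ S →+ A}
    (hgS : ∀ (s : S) (k : K) (x : S), g (s • k) x = g k (x * s)) {h₀ : M →+ A}
    (hh₀ : ∀ k : K, h₀ k = g k 1) (k : K) : coinduce h₀ k = g k := by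
  ext x
  rw [coinduce_apply, ← Submodule.coe_smul, hh₀, hgS, one_mul]

theorem apply_one_smul_of_isTLinear {K : Type*} [AddCommMonoid K] [Module S K] {γ : T →+* S}
    {g : K →+ S →+ A} (hgT : ∀ k : K, IsTLinear γ (g k))
    (hgS : ∀ (s : S) (k : K) (x : S), g (s • k) x = g k (x * s)) (t : T) (k : K) :
    g (γ t • k) 1 = t • g k 1 := by
  rw [hgS, one_mul, ← mul_one (γ t), hgT]

end Coinduction

/-- If `A` is `M`-`i`-injective as a `T`-semimodule (via `γ : T → S`), then
`Hom_T(S, A)` with the action `(s • f) x = f (x * s)` is `M`-`i`-injective as a left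
`S`-semimodule: every `S`-linear map from a subtractive `S`-subsemimodule `K ≤ M`
into `Hom_T(S, A)` extends to `M`. -/
theorem stmt_19 {T S M A : Type} [Semiring T] [Semiring S] (γ : T →+* S)
    [AddCommMonoid M] [Module S M] [AddCommMonoid A] [Module T A]
    (hA : ∀ (K : Type) [AddCommMonoid K] [Module T K] (ι : K →+ M),
      (∀ (t : T) (k : K), ι (t • k) = γ t • ι k) →
      Function.Injective ι →
      (∀ (m : M) (k k' : K), m + ι k = ι k' → ∃ k'' : K, ι k'' = m) →
      ∀ g : K →+ A, (∀ (t : T) (k : K), g (t • k) = t • g k) →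
        ∃ h : M →+ A, (∀ (t : T) (m : M), h (γ t • m) = t • h m) ∧ h.comp ι = g)
    (K : Submodule S M) (hK : ∀ m k : M, k ∈ K → m + k ∈ K → m ∈ K)
    (g : K →+ (S →+ A))
    (hgT : ∀ k : K, IsTLinear γ (g k))
    (hgS : ∀ (s : S) (k : K) (x : S), g (s • k) x = g k (x * s)) :
    ∃ h : M → (S →+ A),
      (∀ m : M, IsTLinear γ (h m)) ∧
      (∀ m m' : M, h (m + m') = h m + h m') ∧
      (∀ (s : S) (m : M) (x : S), h (s • m) x = h m (x * s)) ∧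
      (∀ k : K, h (k : M) = g k) := by
  let _ : Module T K := Module.compHom K γ
  have hsubtractive (m : M) (k k' : K) (h : m + k = k') : ∃ k'' : K, (k'' : M) = m :=
    ⟨⟨m, hK m k k.2 (h ▸ k'.2)⟩, rfl⟩
  obtain ⟨h₀, hh₀T, hh₀g⟩ := hA K K.subtype.toAddMonoidHom (fun _ _ => rfl)
    Subtype.coe_injective hsubtractive (g.flip 1) (apply_one_smul_of_isTLinear hgT hgS)
  exact ⟨coinduce h₀, isTLinear_coinduce γ hh₀T, map_add _, coinduce_smul_apply h₀,
    coinduce_eq_of_eq_apply_one hgS fun k => DFunLike.congr_fun hh₀g k⟩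
end
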